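/- For fixed b ≥ 0, the map λ ↦ P_λ(λ̂ ≤ b) is monotonically decreasing in λ on (0,∞), where λ̂ = D/(Σ_{i=1}^D X_{i:n} + (n-D)T) is computed from n i.i.d. Exp(λ) lifetimes truncated at time T. -/

import Mathlib

open MeasureTheory ProbabilityTheory Finset

/-- The number of failures in `[0, T]` of a lifetime vector `v`. -/
noncomputable def numFail (n : ℕ) (T : ℝ) (v : Fin n → ℝ) : ℕ :=
  (univ.filter fun i => v i ≤ T).card

/-- The estimator `λ̂ = D / (Σ_{v i ≤ T} v i + (n - D) T)` computed from a lifetime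
vector `v` truncated at time `T` (equal to `0` when `D = 0`). -/
noncomputable def estimator (n : ℕ) (T : ℝ) (v : Fin n → ℝ) : ℝ :=
  (numFail n T v : ℝ) /
    ((∑ i ∈ univ.filter fun i => v i ≤ T, v i) + (n - numFail n T v : ℕ) * T)

/-! Couple the two samples: if `Y ~ Exp(λ₁)^⊗n` and `c = λ₁ / λ₂ ≤ 1`, then
`c • Y ~ Exp(λ₂)^⊗n`. Writing `λ̂ = D / Σᵢ min (Yᵢ, T)`, shrinking the nonnegative
lifetimes can only increase the failure count `D` and decrease the total time on test, so
`λ̂(Y) ≤ λ̂(c • Y)`. Hence `{λ̂(c • Y) ≤ b} ⊆ {λ̂(Y) ≤ b}` almost surely. -/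

lemma estimator_denom_eq_sum_min (n : ℕ) (T : ℝ) (v : Fin n → ℝ) :
    (∑ i ∈ univ.filter fun i => v i ≤ T, v i) + ((n - numFail n T v : ℕ) : ℝ) * T
      = ∑ i, min (v i) T := by
  have hcard : (univ.filter fun i => ¬ v i ≤ T).card = n - numFail n T v := by
    have := card_filter_add_card_filter_not (s := (univ : Finset (Fin n))) (fun i => v i ≤ T)
    rw [card_univ, Fintype.card_fin] at this
    rw [numFail]
    omega
  rw [← sum_filter_add_sum_filter_not univ (fun i => v i ≤ T) (fun i => min (v i) T),
    sum_congr rfl fun i hi => min_eq_left (mem_filter.mp hi).2,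
    sum_congr rfl fun i hi => min_eq_right (not_le.mp (mem_filter.mp hi).2).le,
    sum_const, nsmul_eq_mul, hcard]

lemma estimator_eq (n : ℕ) (T : ℝ) (v : Fin n → ℝ) :
    estimator n T v = (numFail n T v : ℝ) / ∑ i, min (v i) T := by
  rw [estimator, estimator_denom_eq_sum_min]

lemma numFail_antitone {n : ℕ} {T : ℝ} {u v : Fin n → ℝ} (huv : u ≤ v) :
    numFail n T v ≤ numFail n T u :=
  card_le_card <| monotone_filter_right univ fun i _ hi => (huv i).trans hi

/-- The hypothesis `0 < Σᵢ min (uᵢ, T)` cannot be dropped: at `u = 0` the estimator is `0`. -/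
lemma estimator_le_of_le {n : ℕ} {T : ℝ} {u v : Fin n → ℝ}
    (huv : u ≤ v) (hpos : 0 < ∑ i, min (u i) T) : estimator n T v ≤ estimator n T u := by
  rw [estimator_eq, estimator_eq]
  exact div_le_div₀ (Nat.cast_nonneg _) (Nat.cast_le.mpr (numFail_antitone huv)) hpos
    (sum_le_sum fun i _ => min_le_min_right T (huv i))

lemma estimator_le_estimator_smul {n : ℕ} {T c : ℝ} (hT : 0 < T) (hc₀ : 0 < c)
    (hc₁ : c ≤ 1) {v : Fin n → ℝ} (hv : 0 ≤ v) : estimator n T v ≤ estimator n T (c • v) := by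
  have hcv : 0 ≤ c • v := smul_nonneg hc₀.le hv
  rcases (sum_nonneg fun i _ => le_min (hcv i) hT.le : 0 ≤ ∑ i, min ((c • v) i) T).eq_or_lt
    with hzero | hpos
  · have hv₀ : v = 0 := by
      funext i
      have hi := (sum_eq_zero_iff_of_nonneg fun i _ => le_min (hcv i) hT.le).mp hzero.symm i
        (mem_univ i)
      obtain ⟨hcvi, -⟩ | ⟨hT₀, -⟩ := min_eq_iff.mp hi
      · exact (smul_eq_zero.mp hcvi).resolve_left hc₀.ne'
      · exact absurd hT₀ hT.ne'
    rw [hv₀, smul_zero]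
  · exact estimator_le_of_le (smul_le_of_le_one_left hv hc₁) hpos

lemma expMeasure_map_const_mul {r c : ℝ} (hr : 0 < r) (hc : 0 < c) :
    (expMeasure r).map (c * ·) = expMeasure (r / c) := by
  have := isProbabilityMeasure_expMeasure hr
  have := isProbabilityMeasure_expMeasure (div_pos hr hc)
  have : IsProbabilityMeasure ((expMeasure r).map (c * ·)) :=
    Measure.isProbabilityMeasure_map (measurable_const_mul c).aemeasurable
  refine Measure.eq_of_cdf _ _ ?_
  ext x
  have hpre : (c * ·) ⁻¹' Set.Iic x = Set.Iic (x / c) := by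
    ext y
    simp only [Set.mem_preimage, Set.mem_Iic, le_div_iff₀ hc, mul_comm]
  rw [cdf_eq_real, map_measureReal_apply (measurable_const_mul c) measurableSet_Iic, hpre,
    ← cdf_eq_real, cdf_expMeasure_eq hr, cdf_expMeasure_eq (div_pos hr hc)]
  simp only [le_div_iff₀ hc, zero_mul, mul_div_assoc', div_mul_eq_mul_div]

lemma ae_nonneg_expMeasure (r : ℝ) : ∀ᵐ x ∂expMeasure r, 0 ≤ x := by
  rw [ae_iff]
  refine measure_mono_null (t := Set.Iio 0) (fun x hx => not_le.mp hx) ?_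
  rw [expMeasure, gammaMeasure, withDensity_apply _ measurableSet_Iio]
  exact lintegral_gammaPDF_of_nonpos le_rfl

lemma ae_nonneg_pi_expMeasure {ι : Type*} [Fintype ι] {r : ℝ} (hr : 0 < r) :
    ∀ᵐ v ∂Measure.pi fun _ : ι => expMeasure r, 0 ≤ v := by
  have := isProbabilityMeasure_expMeasure hr
  exact Filter.eventually_all.2 fun _ =>
    Measure.tendsto_eval_ae_ae.eventually (ae_nonneg_expMeasure r)

lemma measurePreserving_smul_pi_expMeasure {ι : Type*} [Fintype ι] {r c : ℝ} (hr : 0 < r)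
    (hc : 0 < c) :
    MeasurePreserving (c • · : (ι → ℝ) → ι → ℝ) (Measure.pi fun _ => expMeasure r)
      (Measure.pi fun _ => expMeasure (r / c)) := by
  have := isProbabilityMeasure_expMeasure hr
  have := isProbabilityMeasure_expMeasure (div_pos hr hc)
  exact measurePreserving_pi _ _ fun _ =>
    ⟨measurable_const_mul c, expMeasure_map_const_mul hr hc⟩

theorem stmt_17_general (n : ℕ) (T : ℝ) (hT : 0 < T) (b : ℝ) :
    ∀ lam₁ lam₂ : ℝ, 0 < lam₁ → lam₁ ≤ lam₂ →
      (Measure.pi fun _ : Fin n => expMeasure lam₂) {v | estimator n T v ≤ b} ≤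
        (Measure.pi fun _ : Fin n => expMeasure lam₁) {v | estimator n T v ≤ b} := by
  intro lam₁ lam₂ h₁ h₁₂
  have h₂ : 0 < lam₂ := h₁.trans_le h₁₂
  have hc₀ : 0 < lam₁ / lam₂ := div_pos h₁ h₂
  have hc₁ : lam₁ / lam₂ ≤ 1 := (div_le_one h₂).mpr h₁₂
  have hpres := measurePreserving_smul_pi_expMeasure (ι := Fin n) h₁ hc₀
  rw [div_div_cancel₀ h₁.ne'] at hpres
  rw [← hpres.measure_preimage_emb (measurableEmbedding_const_smul₀ hc₀.ne')]
  refine measure_mono_ae ?_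
  filter_upwards [ae_nonneg_pi_expMeasure h₁] with v hv hcv
  exact (estimator_le_estimator_smul hT hc₀ hc₁ hv).trans hcv

/-- For fixed `b ≥ 0`, the map `λ ↦ P_λ(λ̂ ≤ b)` is monotonically decreasing in `λ` on
`(0, ∞)`, where `λ̂` is computed from `n` i.i.d. `Exp(λ)` lifetimes truncated at `T`
(realized canonically as the product measure `(expMeasure λ)^⊗n`). -/
theorem stmt_17 (n : ℕ) (hn : 1 ≤ n) (T : ℝ) (hT : 0 < T) (b : ℝ) (hb : 0 ≤ b) :
    ∀ lam₁ lam₂ : ℝ, 0 < lam₁ → lam₁ ≤ lam₂ →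
      (Measure.pi fun _ : Fin n => expMeasure lam₂) {v | estimator n T v ≤ b} ≤
        (Measure.pi fun _ : Fin n => expMeasure lam₁) {v | estimator n T v ≤ b} :=
  stmt_17_general n T hT b
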